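/- arXiv:2203.16478 — 2 statements merged into one kernel-verified Lean document; each statement's English description precedes it below -/
import Mathlib

section
/- For a symmetric n×n real matrix X, the matrix proj(X) = Σᵢ max(0, sᵢ) vᵢ vᵢᵀ is the unique minimizer of the Frobenius-norm distance ‖X − Y‖_F over all positive semidefinite symmetric matrices Y. -/
/-!
Let `V` be the orthogonal matrix whose rows are the `vᵢ`. Conjugation by `V` preserves the
Frobenius norm and turns `X` into `diagonal s`, the candidate into `diagonal (max 0 s)` and a
positive semidefinite `Y` into a positive semidefinite `B`, whose diagonal is therefore
nonnegative. Entrywise, `(diagonal s - B)ᵢⱼ²` dominates `(diagonal s - diagonal (max 0 s))ᵢⱼ²`: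
off the diagonal the latter vanishes, and on it `max 0 a` is the point of `[0, ∞)` nearest to `a`.
Equality of the sums forces equality of every entry, hence `B = diagonal (max 0 s)`.
-/

open Matrix BigOperators

/-- Frobenius norm of a real square matrix. -/
noncomputable def frob {n : ℕ} (A : Matrix (Fin n) (Fin n) ℝ) : ℝ :=
  Real.sqrt (∑ i, ∑ j, (A i j) ^ 2)

section SumSqEntries

variable {m n : Type*} [Fintype m] [Fintype n]

theorem sum_sq_entries_eq_trace (A : Matrix m n ℝ) : ∑ i, ∑ j, A i j ^ 2 = (Aᵀ * A).trace := by
  simp only [trace, diag, mul_apply, transpose_apply, sq]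
  exact Finset.sum_comm

theorem sum_sq_entries_transpose_mul_mul [DecidableEq m] {V : Matrix m n ℝ} (hV : V * Vᵀ = 1)
    (A : Matrix m m ℝ) : ∑ i, ∑ j, (Vᵀ * A * V) i j ^ 2 = ∑ i, ∑ j, A i j ^ 2 := by
  rw [sum_sq_entries_eq_trace, sum_sq_entries_eq_trace, transpose_mul, transpose_mul,
    transpose_transpose]
  simp only [Matrix.mul_assoc]
  rw [← Matrix.mul_assoc V, hV, Matrix.one_mul, trace_mul_comm, Matrix.mul_assoc, Matrix.mul_assoc,
    hV, Matrix.mul_one]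

end SumSqEntries

theorem sum_smul_vecMulVec_self_eq {m n : Type*} [Fintype m] [DecidableEq m] (v : m → n → ℝ)
    (c : m → ℝ) : ∑ i, c i • vecMulVec (v i) (v i) = (of v)ᵀ * diagonal c * of v := by
  ext a b
  rw [mul_apply]
  simp only [mul_diagonal, Matrix.sum_apply, Matrix.smul_apply, vecMulVec_apply, transpose_apply,
    of_apply, smul_eq_mul]
  exact Finset.sum_congr rfl fun i _ => by ring

theorem of_mul_transpose_of_eq_one {m n : Type*} [Fintype n] [DecidableEq m] {v : m → n → ℝ}
    (hv : ∀ i j, v i ⬝ᵥ v j = if i = j then (1 : ℝ) else 0) : of v * (of v)ᵀ = 1 := by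
  ext i j
  simpa [mul_apply, one_apply, dotProduct] using hv i j

theorem sq_sub_max_zero_le (a : ℝ) {b : ℝ} (hb : 0 ≤ b) : (a - max 0 a) ^ 2 ≤ (a - b) ^ 2 := by
  rcases le_total a 0 with ha | ha
  · rw [max_eq_left ha]; nlinarith
  · rw [max_eq_right ha, sub_self, zero_pow two_ne_zero]; positivity

theorem eq_max_zero_of_sq_sub_eq {a b : ℝ} (hb : 0 ≤ b) (h : (a - b) ^ 2 = (a - max 0 a) ^ 2) :
    b = max 0 a := by
  rcases le_total a 0 with ha | ha
  · rw [max_eq_left ha] at h ⊢; nlinarith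
  · rw [max_eq_right ha] at h ⊢; nlinarith

section DiagonalSub

variable {m : Type*} [DecidableEq m] {s : m → ℝ} {B : Matrix m m ℝ}

theorem diagonal_sub_diagonal_max_zero_apply_sq_le (hB : ∀ i, 0 ≤ B i i) (i j : m) :
    (diagonal s - diagonal (fun i => max 0 (s i))) i j ^ 2 ≤ (diagonal s - B) i j ^ 2 := by
  rcases eq_or_ne i j with rfl | hij
  · simpa using sq_sub_max_zero_le (s i) (hB i)
  · rw [Matrix.sub_apply, diagonal_apply_ne _ hij, diagonal_apply_ne _ hij, sub_self,
      zero_pow two_ne_zero]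
    positivity

theorem apply_eq_diagonal_max_zero_of_sq_eq (hB : ∀ i, 0 ≤ B i i) {i j : m}
    (h : (diagonal s - B) i j ^ 2 = (diagonal s - diagonal (fun i => max 0 (s i))) i j ^ 2) :
    B i j = diagonal (fun i => max 0 (s i)) i j := by
  rcases eq_or_ne i j with rfl | hij
  · simpa using eq_max_zero_of_sq_sub_eq (hB i) (by simpa using h)
  · simpa [hij] using h

variable [Fintype m]

theorem sum_sq_diagonal_sub_diagonal_max_zero_le (hB : ∀ i, 0 ≤ B i i) :
    ∑ i, ∑ j, (diagonal s - diagonal (fun i => max 0 (s i))) i j ^ 2 ≤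
      ∑ i, ∑ j, (diagonal s - B) i j ^ 2 :=
  Finset.sum_le_sum fun i _ => Finset.sum_le_sum fun j _ =>
    diagonal_sub_diagonal_max_zero_apply_sq_le hB i j

theorem eq_diagonal_max_zero_of_sum_sq_eq (hB : ∀ i, 0 ≤ B i i)
    (h : ∑ i, ∑ j, (diagonal s - B) i j ^ 2 =
      ∑ i, ∑ j, (diagonal s - diagonal (fun i => max 0 (s i))) i j ^ 2) :
    B = diagonal (fun i => max 0 (s i)) := by
  simp only [← Fintype.sum_prod_type'] at h
  have hle : ∀ p : m × m, p ∈ Finset.univ →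
      (diagonal s - diagonal (fun i => max 0 (s i))) p.1 p.2 ^ 2 ≤ (diagonal s - B) p.1 p.2 ^ 2 :=
    fun p _ => diagonal_sub_diagonal_max_zero_apply_sq_le hB p.1 p.2
  have heq := (Finset.sum_eq_sum_iff_of_le hle).mp h.symm
  ext i j
  exact apply_eq_diagonal_max_zero_of_sq_eq hB (heq (i, j) (Finset.mem_univ _)).symm

end DiagonalSub

theorem frob_transpose_mul_mul {n : ℕ} {V : Matrix (Fin n) (Fin n) ℝ} (hV : V * Vᵀ = 1)
    (A : Matrix (Fin n) (Fin n) ℝ) : frob (Vᵀ * A * V) = frob A :=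
  congrArg Real.sqrt (sum_sq_entries_transpose_mul_mul hV A)

theorem stmt_1_general {n : ℕ} (X : Matrix (Fin n) (Fin n) ℝ)
    (s : Fin n → ℝ) (v : Fin n → Fin n → ℝ)
    (horth : ∀ i j, v i ⬝ᵥ v j = if i = j then (1 : ℝ) else 0)
    (hdecomp : X = ∑ i, s i • vecMulVec (v i) (v i)) :
    ∀ Y : Matrix (Fin n) (Fin n) ℝ, Y.IsSymm → Y.PosSemidef →
      frob (X - ∑ i, max 0 (s i) • vecMulVec (v i) (v i)) ≤ frob (X - Y) ∧
      (frob (X - Y) = frob (X - ∑ i, max 0 (s i) • vecMulVec (v i) (v i)) →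
        Y = ∑ i, max 0 (s i) • vecMulVec (v i) (v i)) := by
  intro Y _ hY
  set V : Matrix (Fin n) (Fin n) ℝ := of v
  have hV : V * Vᵀ = 1 := of_mul_transpose_of_eq_one horth
  set B := V * Y * Vᵀ
  have hBpsd : B.PosSemidef := by simpa using hY.mul_mul_conjTranspose_same V
  have hB : ∀ i, 0 ≤ B i i := fun i => hBpsd.diag_nonneg
  have hV' : Vᵀ * V = 1 := mul_eq_one_comm.mp hV
  have hY_eq : Y = Vᵀ * B * V := by
    simp only [B, ← Matrix.mul_assoc, hV', Matrix.one_mul]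
    rw [Matrix.mul_assoc, hV', Matrix.mul_one]
  have hXY : X - Y = Vᵀ * (diagonal s - B) * V := by
    rw [hdecomp, sum_smul_vecMulVec_self_eq, hY_eq, Matrix.mul_sub, Matrix.sub_mul]
  have hXP : X - ∑ i, max 0 (s i) • vecMulVec (v i) (v i) =
      Vᵀ * (diagonal s - diagonal (fun i => max 0 (s i))) * V := by
    rw [hdecomp, sum_smul_vecMulVec_self_eq, sum_smul_vecMulVec_self_eq, Matrix.mul_sub,
      Matrix.sub_mul]
  rw [hXY, hXP, frob_transpose_mul_mul hV, frob_transpose_mul_mul hV]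
  refine ⟨Real.sqrt_le_sqrt (sum_sq_diagonal_sub_diagonal_max_zero_le hB), fun h => ?_⟩
  rw [hY_eq, eq_diagonal_max_zero_of_sum_sq_eq hB ((Real.sqrt_inj (by positivity)
    (by positivity)).mp h), ← sum_smul_vecMulVec_self_eq]

/-- the spectral projection proj(X) = Σᵢ max(0,sᵢ) vᵢvᵢᵀ is the unique
minimizer of the Frobenius distance to X over symmetric PSD matrices. -/
theorem stmt_1 {n : ℕ} (X : Matrix (Fin n) (Fin n) ℝ) (hXsym : X.IsSymm)
    (s : Fin n → ℝ) (v : Fin n → Fin n → ℝ)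
    (horth : ∀ i j, v i ⬝ᵥ v j = if i = j then (1 : ℝ) else 0)
    (hdecomp : X = ∑ i, s i • vecMulVec (v i) (v i)) :
    ∀ Y : Matrix (Fin n) (Fin n) ℝ, Y.IsSymm → Y.PosSemidef →
      frob (X - ∑ i, max 0 (s i) • vecMulVec (v i) (v i)) ≤ frob (X - Y) ∧
      (frob (X - Y) = frob (X - ∑ i, max 0 (s i) • vecMulVec (v i) (v i)) →
        Y = ∑ i, max 0 (s i) • vecMulVec (v i) (v i)) :=
  stmt_1_general X s v horth hdecomp
end

section
/- Suppose (p, d) solve the stationarity condition B p + h + Gᵀ d = 0 of the QP subproblem, where h + Gᵀλ = ∇L(u, λ) is the stacked Lagrangian gradient and p^λ = d − λ. Writing L = B + R, the directional derivative of γ(u, λ) = (1/2)‖∇L(u, λ)‖₂² along (p, p^λ) satisfies ∇_{u,λ}γ · (p, p^λ) = −‖∇L‖₂² + ∇Lᵀ R p. -/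
open Matrix BigOperators

theorem mulVec_add_transpose_mulVec_sub_of_stationarity {m n α : Type*} [Fintype m] [Fintype n]
    [CommRing α] (L B : Matrix m m α) (G : Matrix n m α) (h p : m → α) (lam d : n → α)
    (hstat : B *ᵥ p + h + Gᵀ *ᵥ d = 0) :
    L *ᵥ p + Gᵀ *ᵥ (d - lam) = -(h + Gᵀ *ᵥ lam) + (L - B) *ᵥ p := by
  rw [mulVec_sub, sub_mulVec]
  linear_combination hstat

/-- with QP stationarity Bp + h + Gᵀd = 0, ∇L = h + Gᵀλ, p^λ = d - λ and
R = L - B, the directional derivative of γ = (1/2)‖∇L‖² along (p, p^λ), namely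
∇Lᵀ(Lp + Gᵀp^λ), equals -‖∇L‖₂² + ∇Lᵀ R p. -/
theorem stmt_9 {m nc : ℕ}
    (L B R : Matrix (Fin m) (Fin m) ℝ) (hR : R = L - B)
    (G : Matrix (Fin nc) (Fin m) ℝ)
    (h : Fin m → ℝ) (lam d : Fin nc → ℝ) (p : Fin m → ℝ)
    (hstat : B *ᵥ p + h + Gᵀ *ᵥ d = 0)
    (gL : Fin m → ℝ) (hgL : gL = h + Gᵀ *ᵥ lam)
    (plam : Fin nc → ℝ) (hplam : plam = d - lam) :
    gL ⬝ᵥ (L *ᵥ p + Gᵀ *ᵥ plam) = -(gL ⬝ᵥ gL) + gL ⬝ᵥ (R *ᵥ p) := by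
  rw [hplam, mulVec_add_transpose_mulVec_sub_of_stationarity L B G h p lam d hstat, ← hgL, ← hR,
    dotProduct_add, dotProduct_neg]
end
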